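/- arXiv:1606.02028 — 2 statements merged into one kernel-verified Lean document; each statement's English description precedes it below -/
import Mathlib

section
/- Let Δ be a simplicial complex, let {s,w} and {t,w} be edges of Δ, and let u be a vertex not in Δ. Set Σ = ⟨{s,w,u},{t,w,u}⟩ and Γ = Δ ∪ Σ. Let Θ be a linear system of parameters for F[Γ] and ω a linear form. If (F[Δ]/(Θ,ω))_2 = 0 and ω is nonzero in F[Σ]/ΘF[Σ], then (F[Γ]/(Θ,ω))_2 = 0. -/
open MvPolynomial

/-- An (abstract) simplicial complex on the vertex set `V`: a collection of finite
subsets of `V` closed under taking subsets. -/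
def IsSimpComplex {V : Type*} (Δ : Set (Finset V)) : Prop :=
  ∀ σ ∈ Δ, ∀ τ, τ ⊆ σ → τ ∈ Δ

/-- The Stanley–Reisner ideal of `Δ`: generated by the squarefree monomials
corresponding to the nonempty non-faces of `Δ`. -/
noncomputable def stanleyReisnerIdeal (F : Type*) [Field F] {V : Type*}
    (Δ : Set (Finset V)) : Ideal (MvPolynomial V F) :=
  Ideal.span {m | ∃ σ : Finset V, σ.Nonempty ∧ σ ∉ Δ ∧ m = ∏ v ∈ σ, X v}

/-- `θ₁, …, θ_d` is a linear system of parameters for the Stanley–Reisner ring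
`F[Δ]`: each `θᵢ` is a linear form and the quotient of `F[Δ]` by them is a
finite-dimensional F-vector space. -/
def IsLSOP (F : Type*) [Field F] {V : Type*} (Δ : Set (Finset V)) {d : ℕ}
    (θ : Fin d → MvPolynomial V F) : Prop :=
  (∀ i, θ i ∈ homogeneousSubmodule V F 1) ∧
  FiniteDimensional F
    (MvPolynomial V F ⧸ (stanleyReisnerIdeal F Δ ⊔ Ideal.span (Set.range θ)))

/-- The geometric realization of `Δ`, as a subspace of `V → ℝ`. -/
def geomRealization {V : Type*} (Δ : Set (Finset V)) : Set (V → ℝ) :=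
  {f | (∀ v, 0 ≤ f v) ∧ ∃ σ ∈ Δ, (∀ v, f v ≠ 0 → v ∈ σ) ∧ ∑ v ∈ σ, f v = 1}

/-- A simplicial 2-sphere: a simplicial complex whose geometric realization is
homeomorphic to the 2-dimensional unit sphere. -/
def IsSimplicial2Sphere {V : Type*} (Δ : Set (Finset V)) : Prop :=
  IsSimpComplex Δ ∧
  Nonempty (geomRealization Δ ≃ₜ Metric.sphere (0 : EuclideanSpace ℝ (Fin 3)) 1)

/-!
Multiplication by `x_u` maps `F[Σ]` into `F[Γ]`, since adding `u` to a non-face of `Σ` gives a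
non-face of `Γ`; and `F[Γ]/(x_u)` is `F[Δ]`, since every face of `Γ` outside `Δ` contains `u`.
So a quadratic form that vanishes in `F[Δ]/(Θ,ω)` is, modulo `(Θ,ω)`, of the form `x_u ℓ` with
`ℓ` linear, and it suffices that every linear form vanishes in `F[Σ]/(Θ,ω)`. As `{t,w,u}` is a
face of `Γ`, the coefficients of `Θ` at `t, w, u` form an invertible matrix, so modulo `Θ` every
linear form of `F[Σ]` is a multiple of `x_s`; since `ω` is nonzero there, `x_s ∈ (Θ,ω)`.
-/

section

variable {V F : Type*} [Field F]

section LinearForms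

variable [Fintype V]

theorem sum_coeff_smul_X_of_mem_homogeneousSubmodule_one {g : MvPolynomial V F}
    (hg : g ∈ homogeneousSubmodule V F 1) :
    ∑ v, coeff (Finsupp.single v 1) g • X v = g := by
  rw [homogeneousSubmodule_one_eq_span_X, Submodule.mem_span_range_iff_exists_fun] at hg
  obtain ⟨c, rfl⟩ := hg
  classical
  simp [coeff_sum, coeff_X, Finsupp.single_left_inj]

theorem eval_of_mem_homogeneousSubmodule_one {g : MvPolynomial V F}
    (hg : g ∈ homogeneousSubmodule V F 1) (a : V → F) :
    eval a g = ∑ v, coeff (Finsupp.single v 1) g * a v := by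
  conv_lhs => rw [← sum_coeff_smul_X_of_mem_homogeneousSubmodule_one hg]
  simp [map_sum]

theorem aeval_C_mul_X_of_mem_homogeneousSubmodule_one {g : MvPolynomial V F}
    (hg : g ∈ homogeneousSubmodule V F 1) (a : V → F) :
    aeval (fun v ↦ Polynomial.C (a v) * Polynomial.X) g =
      Polynomial.C (eval a g) * Polynomial.X := by
  conv_lhs => rw [← sum_coeff_smul_X_of_mem_homogeneousSubmodule_one hg]
  simp [eval_of_mem_homogeneousSubmodule_one hg, map_sum, Finset.sum_mul,
    Polynomial.smul_eq_C_mul, mul_assoc]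

end LinearForms

section StanleyReisner

variable {Γ Λ : Set (Finset V)}

theorem IsSimpComplex.union (hΓ : IsSimpComplex Γ) (hΛ : IsSimpComplex Λ) :
    IsSimpComplex (Γ ∪ Λ) := by
  rintro σ (hσ | hσ) τ hτσ
  exacts [Or.inl (hΓ σ hσ τ hτσ), Or.inr (hΛ σ hσ τ hτσ)]

theorem prod_X_mem_stanleyReisnerIdeal {σ : Finset V} (hσ : σ.Nonempty) (hσΓ : σ ∉ Γ) :
    ∏ v ∈ σ, X v ∈ stanleyReisnerIdeal F Γ :=
  Ideal.subset_span ⟨σ, hσ, hσΓ, rfl⟩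

theorem X_mem_stanleyReisnerIdeal {v : V} (hv : {v} ∉ Γ) : X v ∈ stanleyReisnerIdeal F Γ := by
  simpa using prod_X_mem_stanleyReisnerIdeal (F := F) (Finset.singleton_nonempty v) hv

theorem mem_stanleyReisnerIdeal_of_coeff_eq_zero [Fintype V] {g : MvPolynomial V F}
    (hg : g ∈ homogeneousSubmodule V F 1)
    (h : ∀ v, {v} ∈ Γ → coeff (Finsupp.single v 1) g = 0) :
    g ∈ stanleyReisnerIdeal F Γ := by
  rw [← sum_coeff_smul_X_of_mem_homogeneousSubmodule_one hg]
  refine Ideal.sum_mem _ fun v _ ↦ ?_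
  by_cases hv : {v} ∈ Γ
  · simp [h v hv]
  · exact Submodule.smul_of_tower_mem _ _ (X_mem_stanleyReisnerIdeal hv)

theorem span_X_mul_stanleyReisnerIdeal_le [DecidableEq V] (u : V)
    (h : ∀ σ, σ ∉ Λ → insert u σ ∉ Γ) :
    Ideal.span {X u} * stanleyReisnerIdeal F Λ ≤ stanleyReisnerIdeal F Γ := by
  rw [stanleyReisnerIdeal, Ideal.span_mul_span', Ideal.span_le]
  rintro _ ⟨_, rfl, _, ⟨σ, -, hσ, rfl⟩, rfl⟩
  change X u * ∏ v ∈ σ, X v ∈ stanleyReisnerIdeal F Γ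
  have hmem := prod_X_mem_stanleyReisnerIdeal (F := F) (Finset.insert_nonempty u σ) (h σ hσ)
  by_cases hu : u ∈ σ
  · rw [Finset.insert_eq_of_mem hu] at hmem
    exact Ideal.mul_mem_left _ _ hmem
  · rwa [← Finset.prod_insert hu]

theorem stanleyReisnerIdeal_le_sup_span_X (u : V) (h : ∀ σ ∈ Γ, σ ∉ Λ → u ∈ σ) :
    stanleyReisnerIdeal F Λ ≤ stanleyReisnerIdeal F Γ ⊔ Ideal.span {X u} := by
  refine Ideal.span_le.2 ?_
  rintro _ ⟨σ, hσ, hσΛ, rfl⟩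
  by_cases hσΓ : σ ∈ Γ
  · exact Ideal.mem_sup_right
      (Ideal.mem_span_singleton.2 (Finset.dvd_prod_of_mem _ (h σ hσΓ hσΛ)))
  · exact Ideal.mem_sup_left (prod_X_mem_stanleyReisnerIdeal hσ hσΓ)

end StanleyReisner

section Graded

attribute [local instance] MvPolynomial.gradedAlgebra

theorem homogeneousComponent_X_mul (u : V) (r : MvPolynomial V F) (n : ℕ) :
    homogeneousComponent (n + 1) (X u * r) = X u * homogeneousComponent n r := by
  have h := DirectSum.coe_decompose_mul_of_left_mem_of_le (homogeneousSubmodule V F) (b := r)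
    (isHomogeneous_X F u) (Nat.le_add_left 1 n)
  rw [Nat.add_sub_cancel] at h
  rw [← decomposition.decompose'_apply, ← decomposition.decompose'_apply]
  exact h

theorem isHomogeneous_span_of_subset {S : Set (MvPolynomial V F)} {n : ℕ}
    (hS : S ⊆ homogeneousSubmodule V F n) :
    (Ideal.span S).IsHomogeneous (homogeneousSubmodule V F) :=
  Ideal.homogeneous_span _ _ fun _ hx ↦ ⟨n, hS hx⟩

theorem isHomogeneous_stanleyReisnerIdeal {Γ : Set (Finset V)} :
    (stanleyReisnerIdeal F Γ).IsHomogeneous (homogeneousSubmodule V F) := by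
  refine Ideal.homogeneous_span _ _ ?_
  rintro _ ⟨σ, -, -, rfl⟩
  exact ⟨∑ _v ∈ σ, 1, IsHomogeneous.prod σ _ _ fun v _ ↦ isHomogeneous_X F v⟩

theorem isHomogeneous_stanleyReisnerIdeal_sup_span {Γ : Set (Finset V)} {d : ℕ}
    {θ : Fin d → MvPolynomial V F} (hθ : ∀ i, θ i ∈ homogeneousSubmodule V F 1)
    {ω : MvPolynomial V F} (hω : ω ∈ homogeneousSubmodule V F 1) :
    (stanleyReisnerIdeal F Γ ⊔ (Ideal.span (Set.range θ) ⊔ Ideal.span {ω})).IsHomogeneous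
      (homogeneousSubmodule V F) :=
  isHomogeneous_stanleyReisnerIdeal.sup <|
    (isHomogeneous_span_of_subset (Set.range_subset_iff.2 hθ)).sup
      (isHomogeneous_span_of_subset (Set.singleton_subset_iff.2 hω))

theorem mem_of_mem_sup_span_X {K : Ideal (MvPolynomial V F)}
    (hK : K.IsHomogeneous (homogeneousSubmodule V F)) {u : V} {n : ℕ}
    (hKu : ∀ g ∈ homogeneousSubmodule V F n, X u * g ∈ K) {p : MvPolynomial V F}
    (hp : p ∈ homogeneousSubmodule V F (n + 1)) (hpK : p ∈ K ⊔ Ideal.span {X u}) : p ∈ K := by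
  obtain ⟨k, hk, _, hr, rfl⟩ := Submodule.mem_sup.1 hpK
  obtain ⟨r, rfl⟩ := Ideal.mem_span_singleton.1 hr
  rw [← homogeneousComponent_eq_self hp, map_add, homogeneousComponent_X_mul]
  exact add_mem (homogeneousComponent_mem_of_mem hK hk _)
    (hKu _ (homogeneousComponent_mem n r))

end Graded

section LSOP

variable [Fintype V] {Γ : Set (Finset V)} {d : ℕ} {θ : Fin d → MvPolynomial V F}

theorem IsLSOP.exists_eval_ne_zero (hθ : IsLSOP F Γ θ) (hΓ : IsSimpComplex Γ) {τ : Finset V}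
    (hτ : τ ∈ Γ) {a : V → F} (ha : a ≠ 0) (haτ : ∀ v, a v ≠ 0 → v ∈ τ) :
    ∃ i, eval a (θ i) ≠ 0 := by
  by_contra! hθa
  -- `X v ↦ a v • X` kills `I_Γ + (Θ)`, so `F[X]` would be a quotient of `F[Γ]/Θ`.
  let φ : MvPolynomial V F →ₐ[F] Polynomial F :=
    aeval fun v ↦ Polynomial.C (a v) * Polynomial.X
  have hker : stanleyReisnerIdeal F Γ ⊔ Ideal.span (Set.range θ) ≤ RingHom.ker φ := by
    refine sup_le (Ideal.span_le.2 ?_) (Ideal.span_le.2 ?_)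
    · rintro _ ⟨σ, -, hσΓ, rfl⟩
      obtain ⟨v, hvσ, hv⟩ : ∃ v ∈ σ, a v = 0 := by
        by_contra! h
        exact hσΓ (hΓ τ hτ σ fun v hv ↦ haτ v (h v hv))
      simp [φ, map_prod, Finset.prod_eq_zero hvσ, hv]
    · rintro _ ⟨i, rfl⟩
      simp [φ, aeval_C_mul_X_of_mem_homogeneousSubmodule_one (hθ.1 i), hθa i]
  have hφ : Function.Surjective φ := by
    obtain ⟨v, hv⟩ : ∃ v, a v ≠ 0 := Function.ne_iff.1 ha
    have hX : φ (C (a v)⁻¹ * X v) = Polynomial.X := by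
      simp [φ, ← mul_assoc, ← Polynomial.C_mul, hv]
    rw [← AlgHom.range_eq_top, eq_top_iff, ← Polynomial.adjoin_X, Algebra.adjoin_le_iff,
      Set.singleton_subset_iff]
    exact ⟨_, hX⟩
  have : Module.Finite F (MvPolynomial V F ⧸ _) := hθ.2
  refine Polynomial.not_finite (Module.Finite.of_surjective
    (Ideal.Quotient.liftₐ _ φ fun p hp ↦ hker hp).toLinearMap fun y ↦ ?_)
  obtain ⟨p, rfl⟩ := hφ y
  exact ⟨Ideal.Quotient.mk _ p, rfl⟩

noncomputable def coeffMatrix {ι κ : Type*} (θ : ι → MvPolynomial V F) (e : κ → V) :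
    Matrix ι κ F :=
  Matrix.of fun i j ↦ coeff (Finsupp.single (e j) 1) (θ i)

theorem IsLSOP.isUnit_coeffMatrix (hθ : IsLSOP F Γ θ) (hΓ : IsSimpComplex Γ) {τ : Finset V}
    (hτ : τ ∈ Γ) {e : Fin d → V} (he : Function.Injective e) (heτ : ∀ j, e j ∈ τ) :
    IsUnit (coeffMatrix θ e) := by
  rw [← Matrix.mulVec_injective_iff_isUnit]
  refine (injective_iff_map_eq_zero (coeffMatrix θ e).mulVecLin).2 fun b hb ↦ ?_
  by_contra hb0
  have ha : Function.extend e b 0 ≠ 0 := fun h ↦ hb0 <| funext fun j ↦ by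
    simpa [he.extend_apply] using congrFun h (e j)
  have haτ : ∀ v, Function.extend e b 0 v ≠ 0 → v ∈ τ := by
    intro v hv
    obtain ⟨j, rfl⟩ : ∃ j, e j = v := by_contra fun hve ↦ hv (Function.extend_apply' _ _ _ hve)
    exact heτ j
  obtain ⟨i, hi⟩ := hθ.exists_eval_ne_zero hΓ hτ ha haτ
  have hsum : ∑ j, coeff (Finsupp.single (e j) 1) (θ i) * b j = 0 := by
    simpa [Matrix.mulVec, dotProduct, coeffMatrix] using congrFun hb i
  refine hi ?_
  rw [eval_of_mem_homogeneousSubmodule_one (hθ.1 i), ← hsum]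
  exact (Fintype.sum_of_injective e he _ _ (fun v hv ↦ by simp [Function.extend_apply' _ _ _ hv])
    fun j ↦ by simp [he.extend_apply]).symm

end LSOP

theorem mul_mem_sup_of_span_singleton_mul_le {R : Type*} [CommRing R] {x g : R}
    {A B C : Ideal R} (h : Ideal.span {x} * A ≤ B) (hg : g ∈ A ⊔ C) : x * g ∈ B ⊔ C := by
  have hxg := Ideal.mul_mem_mul (Ideal.mem_span_singleton_self x) hg
  rw [Ideal.mul_sup] at hxg
  exact sup_le_sup h Ideal.mul_le_right hxg

theorem mem_sup_span_singleton_of_forall_sub_C_mul_mem {J : Ideal (MvPolynomial V F)}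
    {x ω : MvPolynomial V F}
    (hJ : ∀ h ∈ homogeneousSubmodule V F 1, ∃ α : F, h - C α * x ∈ J)
    (hω : ω ∈ homogeneousSubmodule V F 1) (hωJ : ω ∉ J) {g : MvPolynomial V F}
    (hg : g ∈ homogeneousSubmodule V F 1) : g ∈ J ⊔ Ideal.span {ω} := by
  obtain ⟨α, hα⟩ := hJ ω hω
  obtain ⟨β, hβ⟩ := hJ g hg
  have hα0 : α ≠ 0 := by
    rintro rfl
    exact hωJ (by simpa using hα)
  have hC : C (β / α) * C α = (C β : MvPolynomial V F) := by
    rw [← C_mul, div_mul_cancel₀ _ hα0]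
  have hg' : g = (g - C β * x) - C (β / α) * (ω - C α * x) + C (β / α) * ω := by
    linear_combination (-x) * hC
  rw [hg']
  exact add_mem
    (sub_mem (Ideal.mem_sup_left hβ) (Ideal.mul_mem_left _ _ (Ideal.mem_sup_left hα)))
    (Ideal.mem_sup_right (Ideal.mul_mem_left _ _ (Ideal.mem_span_singleton_self ω)))

theorem exists_sub_C_mul_X_mem [Fintype V] {Γ : Set (Finset V)} {d : ℕ}
    {θ : Fin d → MvPolynomial V F} (hθ : ∀ i, θ i ∈ homogeneousSubmodule V F 1) {e : Fin d → V}
    (hM : IsUnit (coeffMatrix θ e)) {s : V} (hse : ∀ j, e j ≠ s)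
    (hvert : ∀ v, {v} ∈ Γ → v = s ∨ v ∈ Set.range e) {h : MvPolynomial V F}
    (hh : h ∈ homogeneousSubmodule V F 1) :
    ∃ α : F, h - C α * X s ∈ stanleyReisnerIdeal F Γ ⊔ Ideal.span (Set.range θ) := by
  obtain ⟨c, hc⟩ :=
    Matrix.vecMul_surjective_iff_isUnit.2 hM fun j ↦ coeff (Finsupp.single (e j) 1) h
  set q := h - ∑ i, c i • θ i
  have hq : q ∈ homogeneousSubmodule V F 1 :=
    sub_mem hh (Submodule.sum_mem _ fun i _ ↦ Submodule.smul_mem _ _ (hθ i))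
  have hΘ : ∑ i, c i • θ i ∈ Ideal.span (Set.range θ) :=
    Ideal.sum_mem _ fun i _ ↦ Submodule.smul_of_tower_mem _ _ (Ideal.subset_span ⟨i, rfl⟩)
  set α := coeff (Finsupp.single s 1) q
  have hX : C α * X s ∈ homogeneousSubmodule V F 1 := by
    rw [mem_homogeneousSubmodule]
    exact isHomogeneous_C_mul_X α s
  have hrest : q - C α * X s ∈ stanleyReisnerIdeal F Γ := by
    refine mem_stanleyReisnerIdeal_of_coeff_eq_zero (sub_mem hq hX) fun v hv ↦ ?_
    rcases hvert v hv with rfl | ⟨j, rfl⟩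
    · simp [α]
    · have hcj := congrFun hc j
      classical
      simp [q, coeff_sum, coeff_X, Finsupp.single_left_inj, (hse j).symm, Matrix.vecMul,
        dotProduct, coeffMatrix] at hcj ⊢
      rw [hcj, sub_self]
  refine ⟨α, ?_⟩
  rw [show h - C α * X s = (q - C α * X s) + ∑ i, c i • θ i by simp only [q]; abel]
  exact add_mem (Ideal.mem_sup_left hrest) (Ideal.mem_sup_right hΘ)

section TwoTriangles

variable [DecidableEq V] {s t w u : V}

def twoTriangles (s t w u : V) : Set (Finset V) :=
  {τ | τ ⊆ {s, w, u} ∨ τ ⊆ {t, w, u}}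

theorem isSimpComplex_twoTriangles : IsSimpComplex (twoTriangles s t w u) := by
  rintro σ (hσ | hσ) τ hτσ
  exacts [Or.inl (hτσ.trans hσ), Or.inr (hτσ.trans hσ)]

theorem eq_or_mem_range_of_singleton_mem_twoTriangles {v : V}
    (hv : {v} ∈ twoTriangles s t w u) : v = s ∨ v ∈ Set.range ![t, w, u] := by
  rcases hv with hv | hv <;> simp at hv <;> rcases hv with rfl | rfl | rfl <;> simp

theorem insert_notMem_union_twoTriangles {Δ : Set (Finset V)} (hu : ∀ σ ∈ Δ, u ∉ σ)
    {σ : Finset V} (hσ : σ ∉ twoTriangles s t w u) :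
    insert u σ ∉ Δ ∪ twoTriangles s t w u := by
  rintro (h | h)
  · exact hu _ h (Finset.mem_insert_self u σ)
  · exact hσ (isSimpComplex_twoTriangles _ h σ (Finset.subset_insert u σ))

theorem mem_of_mem_union_twoTriangles_of_notMem {Δ : Set (Finset V)} (hΔ : IsSimpComplex Δ)
    (hes : ({s, w} : Finset V) ∈ Δ) (het : ({t, w} : Finset V) ∈ Δ) {σ : Finset V}
    (hσ : σ ∈ Δ ∪ twoTriangles s t w u) (hσΔ : σ ∉ Δ) : u ∈ σ := by
  by_contra huσ
  rcases hσ with hσ | hσ | hσ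
  · exact hσΔ hσ
  · refine hσΔ (hΔ _ hes σ fun v hv ↦ ?_)
    have := hσ hv
    simp only [Finset.mem_insert, Finset.mem_singleton] at this ⊢
    rcases this with rfl | rfl | rfl <;> tauto
  · refine hσΔ (hΔ _ het σ fun v hv ↦ ?_)
    have := hσ hv
    simp only [Finset.mem_insert, Finset.mem_singleton] at this ⊢
    rcases this with rfl | rfl | rfl <;> tauto

theorem IsLSOP.isUnit_coeffMatrix_twoTriangles [Fintype V] {Δ : Set (Finset V)}
    {θ : Fin 3 → MvPolynomial V F} (hθ : IsLSOP F (Δ ∪ twoTriangles s t w u) θ)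
    (hΔ : IsSimpComplex Δ) (htw : t ≠ w) (hut : u ≠ t) (huw : u ≠ w) :
    IsUnit (coeffMatrix θ ![t, w, u]) := by
  refine hθ.isUnit_coeffMatrix (hΔ.union isSimpComplex_twoTriangles) (τ := {t, w, u})
    (Or.inr (Or.inr subset_rfl)) ?_ (by simp [Fin.forall_fin_succ])
  intro i j hij
  fin_cases i <;> fin_cases j <;> simp_all [eq_comm]

end TwoTriangles

end

/-- Lemma 3.5: gluing two triangles `{s,w,u}, {t,w,u}` along the edges
`{s,w}, {t,w}` of `Δ` at a new vertex `u`. If the degree-2 part of `F[Δ]/(Θ,ω)`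
vanishes and `ω` is nonzero in `F[Σ]/ΘF[Σ]`, then the degree-2 part of `F[Γ]/(Θ,ω)`
vanishes. -/
theorem stmt6 {V F : Type*} [Fintype V] [DecidableEq V] [Field F]
    (Δ : Set (Finset V)) (hΔ : IsSimpComplex Δ)
    (s t u w : V) (hst : s ≠ t) (hsw : s ≠ w) (htw : t ≠ w)
    (hes : ({s, w} : Finset V) ∈ Δ) (het : ({t, w} : Finset V) ∈ Δ)
    (hu : ∀ σ ∈ Δ, u ∉ σ)
    (Sg Γ : Set (Finset V))
    (hSg : Sg = {τ | τ ⊆ ({s, w, u} : Finset V) ∨ τ ⊆ ({t, w, u} : Finset V)})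
    (hΓ : Γ = Δ ∪ Sg)
    (θ : Fin 3 → MvPolynomial V F) (hθ : IsLSOP F Γ θ)
    (ω : MvPolynomial V F) (hω : ω ∈ homogeneousSubmodule V F 1)
    (hvanΔ : ∀ p ∈ homogeneousSubmodule V F 2,
      p ∈ stanleyReisnerIdeal F Δ ⊔ (Ideal.span (Set.range θ) ⊔ Ideal.span {ω}))
    (hwSg : ω ∉ stanleyReisnerIdeal F Sg ⊔ Ideal.span (Set.range θ)) :
    ∀ p ∈ homogeneousSubmodule V F 2,
      p ∈ stanleyReisnerIdeal F Γ ⊔ (Ideal.span (Set.range θ) ⊔ Ideal.span {ω}) := by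
  obtain rfl : Sg = twoTriangles s t w u := hSg
  subst hΓ
  have hus : u ≠ s := fun h ↦ hu _ hes (by simp [h])
  have hut : u ≠ t := fun h ↦ hu _ het (by simp [h])
  have huw : u ≠ w := fun h ↦ hu _ hes (by simp [h])
  have hM := hθ.isUnit_coeffMatrix_twoTriangles hΔ htw hut huw
  have hdeg1 : ∀ g ∈ homogeneousSubmodule V F 1,
      g ∈ stanleyReisnerIdeal F (twoTriangles s t w u) ⊔
        (Ideal.span (Set.range θ) ⊔ Ideal.span {ω}) := by
    rw [← sup_assoc]
    have hse : ∀ j, ![t, w, u] j ≠ s := by simp [Fin.forall_fin_succ, hst.symm, hsw.symm, hus]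
    exact fun g ↦ mem_sup_span_singleton_of_forall_sub_C_mul_mem
      (fun h ↦ exists_sub_C_mul_X_mem hθ.1 hM hse
        fun v ↦ eq_or_mem_range_of_singleton_mem_twoTriangles) hω hwSg
  have hmul := span_X_mul_stanleyReisnerIdeal_le (F := F) (Λ := twoTriangles s t w u)
    (Γ := Δ ∪ twoTriangles s t w u) u fun σ ↦ insert_notMem_union_twoTriangles hu
  have hle := stanleyReisnerIdeal_le_sup_span_X (F := F) u fun σ ↦
    mem_of_mem_union_twoTriangles_of_notMem (s := s) (t := t) (w := w) hΔ hes het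
  exact fun p hp ↦ mem_of_mem_sup_span_X (isHomogeneous_stanleyReisnerIdeal_sup_span hθ.1 hω)
    (fun g hg ↦ mul_mem_sup_of_span_singleton_mul_le hmul (hdeg1 g hg)) hp <|
      sup_le (hle.trans (sup_le_sup_right le_sup_left _)) (le_sup_right.trans le_sup_left)
        (hvanΔ p hp)
end

section
/- Call a finite graph G Laman-sparse if every subset W of its vertices with |W| ≥ 2 spans at most 2|W| − 3 edges, and call a vertex subset U Laman if it spans exactly 2|U| − 3 edges and the induced graph on U is Laman-sparse. If B_1 and B_2 are vertex subsets of a Laman-sparse graph G, each Laman, with |B_1 ∩ B_2| ≥ 2, then B_1 ∪ B_2 spans at least 2|B_1 ∪ B_2| − 3 edges; hence B_1 ∪ B_2 is Laman and every edge of G with both endpoints in B_1 ∪ B_2 has both endpoints in B_1 or both in B_2. -/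
/-!
Write `E(W)` for the edges spanned by `W`. Since `E(B₁ ∩ B₂) = E(B₁) ∩ E(B₂)`, inclusion–exclusion
on vertices and on edges, with `|E(Bᵢ)| = 2|Bᵢ| − 3` and sparsity of `B₁ ∩ B₂`, shows that
`E(B₁) ∪ E(B₂)` has at least `2|B₁ ∪ B₂| − 3` edges. Sparsity of `B₁ ∪ B₂` bounds the larger set
`E(B₁ ∪ B₂)` by the same number, so `E(B₁ ∪ B₂) = E(B₁) ∪ E(B₂)` and `B₁ ∪ B₂` spans exactly
`2|B₁ ∪ B₂| − 3` edges.
-/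

/-- The set of edges of `G` spanned by the vertex set `W` (both endpoints in `W`). -/
noncomputable def spannedEdges {V : Type*} [Fintype V] [DecidableEq V]
    (G : SimpleGraph V) [DecidableRel G.Adj] (W : Finset V) : Finset (Sym2 V) :=
  @Finset.filter _ (fun e => ∀ v ∈ e, v ∈ W) (Classical.decPred _) G.edgeFinset

/-- `G` is Laman-sparse: every `W` with `|W| ≥ 2` spans at most `2|W| − 3` edges. -/
def LamanSparse {V : Type*} [Fintype V] [DecidableEq V]
    (G : SimpleGraph V) [DecidableRel G.Adj] : Prop :=
  ∀ W : Finset V, 2 ≤ W.card → (spannedEdges G W).card + 3 ≤ 2 * W.card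

/-- `U` is a Laman subset: it spans exactly `2|U| − 3` edges and the induced graph on
`U` is Laman-sparse. -/
def LamanSet {V : Type*} [Fintype V] [DecidableEq V]
    (G : SimpleGraph V) [DecidableRel G.Adj] (U : Finset V) : Prop :=
  (spannedEdges G U).card + 3 = 2 * U.card ∧
  ∀ W : Finset V, W ⊆ U → 2 ≤ W.card → (spannedEdges G W).card + 3 ≤ 2 * W.card

open Finset

section SpannedEdges

variable {V : Type*} [Fintype V] [DecidableEq V] (G : SimpleGraph V) [DecidableRel G.Adj]

@[simp]
lemma mem_spannedEdges {W : Finset V} {e : Sym2 V} :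
    e ∈ spannedEdges G W ↔ e ∈ G.edgeFinset ∧ ∀ v ∈ e, v ∈ W := by
  simp [spannedEdges]

lemma spannedEdges_mono {W W' : Finset V} (h : W ⊆ W') :
    spannedEdges G W ⊆ spannedEdges G W' := by
  intro e he
  rw [mem_spannedEdges] at he ⊢
  exact ⟨he.1, fun v hv => h (he.2 v hv)⟩

lemma spannedEdges_inter (B₁ B₂ : Finset V) :
    spannedEdges G (B₁ ∩ B₂) = spannedEdges G B₁ ∩ spannedEdges G B₂ := by
  ext e
  simp only [mem_inter, mem_spannedEdges, forall_and]
  tauto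

lemma union_spannedEdges_subset (B₁ B₂ : Finset V) :
    spannedEdges G B₁ ∪ spannedEdges G B₂ ⊆ spannedEdges G (B₁ ∪ B₂) :=
  union_subset (spannedEdges_mono G subset_union_left) (spannedEdges_mono G subset_union_right)

variable {G}

lemma LamanSparse.lamanSet_of_card_spannedEdges (hG : LamanSparse G) {U : Finset V}
    (hU : #(spannedEdges G U) + 3 = 2 * #U) : LamanSet G U :=
  ⟨hU, fun W _ hW => hG W hW⟩

lemma LamanSparse.two_mul_card_union_le {B₁ B₂ : Finset V} (hG : LamanSparse G)
    (h₁ : #(spannedEdges G B₁) + 3 = 2 * #B₁) (h₂ : #(spannedEdges G B₂) + 3 = 2 * #B₂)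
    (hmeet : 2 ≤ #(B₁ ∩ B₂)) :
    2 * #(B₁ ∪ B₂) ≤ #(spannedEdges G B₁ ∪ spannedEdges G B₂) + 3 := by
  have hV := card_union_add_card_inter B₁ B₂
  have hE := card_union_add_card_inter (spannedEdges G B₁) (spannedEdges G B₂)
  rw [← spannedEdges_inter] at hE
  have hI := hG _ hmeet
  omega

lemma LamanSparse.spannedEdges_union {B₁ B₂ : Finset V} (hG : LamanSparse G)
    (h₁ : #(spannedEdges G B₁) + 3 = 2 * #B₁) (h₂ : #(spannedEdges G B₂) + 3 = 2 * #B₂)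
    (hmeet : 2 ≤ #(B₁ ∩ B₂)) :
    spannedEdges G (B₁ ∪ B₂) = spannedEdges G B₁ ∪ spannedEdges G B₂ := by
  have hlower := hG.two_mul_card_union_le h₁ h₂ hmeet
  have hupper := hG (B₁ ∪ B₂) (hmeet.trans (card_le_card inter_subset_union))
  exact (eq_of_subset_of_card_le (union_spannedEdges_subset G B₁ B₂) (by omega)).symm

end SpannedEdges

/-- in a Laman-sparse graph, the union of two Laman subsets meeting in
at least 2 vertices spans at least `2|B₁ ∪ B₂| − 3` edges; hence it is Laman and each
spanned edge is spanned by `B₁` or by `B₂`. -/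
theorem stmt14 {V : Type*} [Fintype V] [DecidableEq V]
    (G : SimpleGraph V) [DecidableRel G.Adj] (hG : LamanSparse G)
    (B₁ B₂ : Finset V) (h₁ : LamanSet G B₁) (h₂ : LamanSet G B₂)
    (hmeet : 2 ≤ (B₁ ∩ B₂).card) :
    2 * (B₁ ∪ B₂).card ≤ (spannedEdges G (B₁ ∪ B₂)).card + 3 ∧
    LamanSet G (B₁ ∪ B₂) ∧
    ∀ e ∈ spannedEdges G (B₁ ∪ B₂), e ∈ spannedEdges G B₁ ∨ e ∈ spannedEdges G B₂ := by
  have hedges := hG.spannedEdges_union h₁.1 h₂.1 hmeet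
  have hlower : 2 * #(B₁ ∪ B₂) ≤ #(spannedEdges G (B₁ ∪ B₂)) + 3 :=
    hedges ▸ hG.two_mul_card_union_le h₁.1 h₂.1 hmeet
  have hupper := hG (B₁ ∪ B₂) (hmeet.trans (card_le_card inter_subset_union))
  refine ⟨hlower, hG.lamanSet_of_card_spannedEdges (by omega), fun e he => ?_⟩
  rwa [hedges, mem_union] at he
end
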